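/- Let L ⊆ S be irreducible spherical with |L| ≥ 4, let s, t, p be consecutive vertices in the Coxeter–Dynkin diagram of L, and let r ∈ S with {s,t,p,r} not spherical. Assume S is 3-rigid and of type FC. Then at least one of the pairs {s,t} or {t,p} is good with respect to r. -/
import Mathlib


/-- A Coxeter matrix on the set `S` of generators: symmetric, `1` on the diagonal,
never `1` off the diagonal; the value `0` stands for `∞`. -/
structure CoxMat (S : Type*) where
  m : S → S → ℕ
  symm : ∀ a b, m a b = m b a
  diag : ∀ a, m a a = 1
  offDiag : ∀ a b, a ≠ b → m a b ≠ 1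

namespace CoxMat

variable {S : Type*} (C : CoxMat S)

/-- Adjacency in the defining graph: `a ≠ b` and `⟨a,b⟩` is finite (label `≠ ∞`). -/
def Adj (a b : S) : Prop := a ≠ b ∧ C.m a b ≠ 0

/-- `J^⊥`: the elements of `S ∖ J` commuting with every element of `J`. -/
def perp (J : Set S) : Set S := {a | a ∉ J ∧ ∀ j ∈ J, C.m a j = 2}

/-- For a Coxeter generating set of type FC, a subset is spherical if and only if its
elements are pairwise adjacent in the defining graph. -/
def Spherical (J : Set S) : Prop := J.Pairwise C.Adj

/-- `J` is irreducible: it is not contained in `K ∪ K^⊥` for a non-empty proper `K ⊂ J`. -/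
def Irred (J : Set S) : Prop :=
  ∀ K : Set S, K ⊂ J → K.Nonempty → ¬ J ⊆ K ∪ C.perp K

/-- `a` and `b` lie in the same connected component of the subgraph of the defining
graph induced on the complement of `X`. -/
def SameComp (X : Set S) (a b : S) : Prop :=
  a ∉ X ∧ b ∉ X ∧ Relation.ReflTransGen (fun x y => x ∉ X ∧ y ∉ X ∧ C.Adj x y) a b

/-- The element `t ∈ L` is good with respect to `r`: `r ≠ t`, `r` is not adjacent to `t`,
and `L ∖ (t ∪ t^⊥)` is non-empty and in the same component of `S ∖ (t ∪ t^⊥)` as `r`. -/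
def GoodElt (L : Set S) (r t : S) : Prop :=
  r ≠ t ∧ ¬ C.Adj r t ∧ (L \ ({t} ∪ C.perp {t})).Nonempty ∧
    ∀ l ∈ L \ ({t} ∪ C.perp {t}), C.SameComp ({t} ∪ C.perp {t}) l r

/-- The non-commuting pair `{s,t} ⊆ L` is good with respect to `r`: `{s,t,r}` is not
spherical, and `L ∖ ({s,t} ∪ {s,t}^⊥)` is non-empty and in the same component of
`S ∖ ({s,t} ∪ {s,t}^⊥)` as `r`. -/
def GoodPair (L : Set S) (r s t : S) : Prop :=
  ¬ C.Spherical {s, t, r} ∧ (L \ ({s, t} ∪ C.perp {s, t})).Nonempty ∧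
    ∀ l ∈ L \ ({s, t} ∪ C.perp {s, t}), C.SameComp ({s, t} ∪ C.perp {s, t}) l r

/-- `S` is 3-rigid: no irreducible spherical subset of size `≥ 3` weakly separates `S`,
i.e. for any such `J` the subgraph induced on `S ∖ (J ∪ J^⊥)` is connected (or empty). -/
def ThreeRigid : Prop :=
  ∀ J : Set S, C.Spherical J → C.Irred J → 3 ≤ J.ncard →
    ∀ a b : S, a ∉ J ∪ C.perp J → b ∉ J ∪ C.perp J → C.SameComp (J ∪ C.perp J) a b

/-- `s, t, p` are consecutive vertices in the Coxeter–Dynkin diagram of `L`. -/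
def Consecutive (L : Set S) (s t p : S) : Prop :=
  s ∈ L ∧ t ∈ L ∧ p ∈ L ∧ s ≠ t ∧ t ≠ p ∧ s ≠ p ∧
    C.m s t ≠ 2 ∧ C.m t p ≠ 2 ∧ C.m s p = 2

/-- `L` is exposed: `|L| ≤ 2`, or `|L| = 3` and at least two elements of `L` are
adjacent to no element of `S ∖ (L ∪ L^⊥)`. -/
def Exposed (L : Set S) : Prop :=
  L.ncard ≤ 2 ∨ (L.ncard = 3 ∧ ∃ a ∈ L, ∃ b ∈ L, a ≠ b ∧
    (∀ k, k ∉ L ∪ C.perp L → ¬ C.Adj a k) ∧ (∀ k, k ∉ L ∪ C.perp L → ¬ C.Adj b k))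

end CoxMat

namespace CoxMat

variable {S : Type*} (C : CoxMat S)

lemma adj_symm' {a b : S} (h : C.Adj a b) : C.Adj b a :=
  ⟨h.1.symm, by rw [C.symm]; exact h.2⟩

lemma sameComp_head' {X : Set S} {a b r : S} (ha : a ∉ X) (hab : C.Adj a b)
    (h : C.SameComp X b r) : C.SameComp X a r :=
  ⟨ha, h.2.1, Relation.ReflTransGen.head ⟨ha, h.1, hab⟩ h.2.2⟩

end CoxMat

/-- Let `L` be irreducible spherical with `|L| ≥ 4`, let `s, t, p` be consecutive
vertices in the Coxeter–Dynkin diagram of `L`, and let `r ∈ S` with `{s,t,p,r}` not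
spherical. If `S` is 3-rigid (and of type FC), then at least one of the pairs `{s,t}`
or `{t,p}` is good with respect to `r`. -/
theorem good_pair_jump {S : Type*} (C : CoxMat S)
    (hrig : C.ThreeRigid) (L : Set S)
    (hsph : C.Spherical L) (hirr : C.Irred L) (hcard : 4 ≤ L.ncard)
    (s t p r : S) (hcons : C.Consecutive L s t p)
    (hr : ¬ C.Spherical {s, t, p, r}) :
    C.GoodPair L r s t ∨ C.GoodPair L r t p := by
  obtain ⟨hs, ht, hp, hst, htp, hsp, hmst, hmtp, hmsp⟩ := hcons
  -- r is not one of s, t, p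
  have hrmem : r ∉ ({s, t, p} : Set S) := by
    intro hmem
    apply hr
    apply hsph.mono
    intro x hx
    simp only [Set.mem_insert_iff, Set.mem_singleton_iff] at hx hmem
    rcases hx with h | h | h | h
    · exact h ▸ hs
    · exact h ▸ ht
    · exact h ▸ hp
    · rcases hmem with hm | hm | hm
      exacts [h ▸ hm ▸ hs, h ▸ hm ▸ ht, h ▸ hm ▸ hp]
  have hrs_ne : r ≠ s := fun h => hrmem (by simp [h])
  have hrt_ne : r ≠ t := fun h => hrmem (by simp [h])
  have hrp_ne : r ≠ p := fun h => hrmem (by simp [h])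
  -- r is not adjacent to all of s, t, p
  have hnotall : ¬ (C.Adj r s ∧ C.Adj r t ∧ C.Adj r p) := by
    rintro ⟨h1, h2, h3⟩
    apply hr
    intro a ha b hb hab
    simp only [Set.mem_insert_iff, Set.mem_singleton_iff] at ha hb
    rcases ha with rfl | rfl | rfl | rfl <;> rcases hb with rfl | rfl | rfl | rfl <;>
      first
        | exact absurd rfl hab
        | exact hsph hs ht hab
        | exact hsph ht hs hab
        | exact hsph hs hp hab
        | exact hsph hp hs hab
        | exact hsph ht hp hab
        | exact hsph hp ht hab
        | exact C.adj_symm' h1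
        | exact C.adj_symm' h2
        | exact C.adj_symm' h3
        | exact h1
        | exact h2
        | exact h3
  -- p avoids {s,t} ∪ {s,t}^⊥ and s avoids {t,p} ∪ {t,p}^⊥
  have hpXA : p ∉ ({s, t} : Set S) ∪ C.perp {s, t} := by
    rintro (h | h)
    · simp only [Set.mem_insert_iff, Set.mem_singleton_iff] at h
      rcases h with rfl | rfl
      · exact hsp rfl
      · exact htp rfl
    · have := h.2 t (by simp)
      exact hmtp ((C.symm t p).trans this)
  have hsXB : s ∉ ({t, p} : Set S) ∪ C.perp {t, p} := by
    rintro (h | h)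
    · simp only [Set.mem_insert_iff, Set.mem_singleton_iff] at h
      rcases h with rfl | rfl
      · exact hst rfl
      · exact hsp rfl
    · have := h.2 t (by simp)
      exact hmst ((C.symm s t).symm ▸ this)
  -- r avoids the relevant separators
  have hrXA : ¬ (C.Adj r s ∧ C.Adj r t) → r ∉ ({s, t} : Set S) ∪ C.perp {s, t} := by
    rintro hna (h | h)
    · simp only [Set.mem_insert_iff, Set.mem_singleton_iff] at h
      rcases h with rfl | rfl
      · exact hrs_ne rfl
      · exact hrt_ne rfl
    · exact hna ⟨⟨hrs_ne, by rw [h.2 s (by simp)]; norm_num⟩,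
        ⟨hrt_ne, by rw [h.2 t (by simp)]; norm_num⟩⟩
  have hrXB : ¬ (C.Adj r t ∧ C.Adj r p) → r ∉ ({t, p} : Set S) ∪ C.perp {t, p} := by
    rintro hna (h | h)
    · simp only [Set.mem_insert_iff, Set.mem_singleton_iff] at h
      rcases h with rfl | rfl
      · exact hrt_ne rfl
      · exact hrp_ne rfl
    · exact hna ⟨⟨hrt_ne, by rw [h.2 t (by simp)]; norm_num⟩,
        ⟨hrp_ne, by rw [h.2 p (by simp)]; norm_num⟩⟩
  -- non-sphericity makers
  have mkNSA : (¬ C.Adj r s ∨ ¬ C.Adj r t) → ¬ C.Spherical {s, t, r} := by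
    rintro (h | h) hspr
    · exact h (C.adj_symm' (hspr (by simp) (by simp) (Ne.symm hrs_ne)))
    · exact h (C.adj_symm' (hspr (by simp) (by simp) (Ne.symm hrt_ne)))
  have mkNSB : (¬ C.Adj r t ∨ ¬ C.Adj r p) → ¬ C.Spherical {t, p, r} := by
    rintro (h | h) hspr
    · exact h (C.adj_symm' (hspr (by simp) (by simp) (Ne.symm hrt_ne)))
    · exact h (C.adj_symm' (hspr (by simp) (by simp) (Ne.symm hrp_ne)))
  -- finishing moves
  have finishA : ¬ C.Spherical {s, t, r} →
      C.SameComp (({s, t} : Set S) ∪ C.perp {s, t}) p r →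
      C.GoodPair L r s t ∨ C.GoodPair L r t p := by
    intro hns hconn
    left
    refine ⟨hns, ⟨p, hp, hpXA⟩, ?_⟩
    intro l hl
    by_cases hlp : l = p
    · subst hlp; exact hconn
    · exact C.sameComp_head' hl.2 (hsph hl.1 hp hlp) hconn
  have finishB : ¬ C.Spherical {t, p, r} →
      C.SameComp (({t, p} : Set S) ∪ C.perp {t, p}) s r →
      C.GoodPair L r t p ∨ C.GoodPair L r s t := by
    intro hns hconn
    left
    refine ⟨hns, ⟨s, hs, hsXB⟩, ?_⟩
    intro l hl
    by_cases hls : l = s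
    · subst hls; exact hconn
    · exact C.sameComp_head' hl.2 (hsph hl.1 hs hls) hconn
  by_cases hrp : C.Adj r p
  · -- easy case: direct edge from p to r
    have hna : ¬ (C.Adj r s ∧ C.Adj r t) := fun h => hnotall ⟨h.1, h.2, hrp⟩
    have hrA := hrXA hna
    have hns : ¬ C.Adj r s ∨ ¬ C.Adj r t := by
      by_cases h : C.Adj r s
      · exact Or.inr fun h2 => hna ⟨h, h2⟩
      · exact Or.inl h
    exact finishA (mkNSA hns)
      ⟨hpXA, hrA, Relation.ReflTransGen.single ⟨hpXA, hrA, C.adj_symm' hrp⟩⟩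
  by_cases hrs : C.Adj r s
  · -- easy case: direct edge from s to r
    have hna : ¬ (C.Adj r t ∧ C.Adj r p) := fun h => hrp h.2
    have hrB := hrXB hna
    exact (finishB (mkNSB (Or.inr hrp))
      ⟨hsXB, hrB, Relation.ReflTransGen.single ⟨hsXB, hrB, C.adj_symm' hrs⟩⟩).symm
  -- hard case: r adjacent to neither s nor p
  have hmrs : C.m r s = 0 := by by_contra h; exact hrs ⟨hrs_ne, h⟩
  have hmrp : C.m r p = 0 := by by_contra h; exact hrp ⟨hrp_ne, h⟩
  have hrA : r ∉ ({s, t} : Set S) ∪ C.perp {s, t} := hrXA (fun h => hrs h.1)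
  have hrB : r ∉ ({t, p} : Set S) ∪ C.perp {t, p} := hrXB (fun h => hrp h.2)
  -- set up 3-rigidity for J = {s,t,p}
  have hJsub : ({s, t, p} : Set S) ⊆ L := by
    intro x hx
    simp only [Set.mem_insert_iff, Set.mem_singleton_iff] at hx
    rcases hx with h | h | h
    exacts [h ▸ hs, h ▸ ht, h ▸ hp]
  have hJsph : C.Spherical {s, t, p} := hsph.mono hJsub
  have hJ3 : ({s, t, p} : Set S).ncard = 3 :=
    Set.ncard_eq_three.mpr ⟨s, t, p, hst, hsp, htp, rfl⟩
  have hJirr : C.Irred {s, t, p} := by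
    intro K hK hKne hsubK
    by_cases htK : t ∈ K
    · obtain ⟨j, hjJ, hjK⟩ := Set.exists_of_ssubset hK
      have hjperp : j ∈ C.perp K := (hsubK hjJ).resolve_left hjK
      have h2 : C.m j t = 2 := hjperp.2 t htK
      simp only [Set.mem_insert_iff, Set.mem_singleton_iff] at hjJ
      rcases hjJ with h | h | h
      · exact hmst (h ▸ h2)
      · exact hjK (h.symm ▸ htK)
      · exact hmtp ((C.symm t p).trans (h ▸ h2))
    · have htperp : t ∈ C.perp K := (hsubK (by simp)).resolve_left htK
      obtain ⟨k, hk⟩ := hKne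
      have h2 : C.m t k = 2 := htperp.2 k hk
      have hkJ := hK.1 hk
      simp only [Set.mem_insert_iff, Set.mem_singleton_iff] at hkJ
      rcases hkJ with h | h | h
      · exact hmst ((C.symm s t).trans (h ▸ h2))
      · exact htK (h ▸ hk)
      · exact hmtp (h ▸ h2)
  -- an element of L outside {s,t,p} ∪ {s,t,p}^⊥
  have hJneL : ({s, t, p} : Set S) ≠ L := by
    intro h
    rw [← h, hJ3] at hcard
    omega
  obtain ⟨l₀, hl₀L, hl₀X⟩ :=
    Set.not_subset.mp (hirr {s, t, p} (hJsub.ssubset_of_ne hJneL) ⟨s, by simp⟩)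
  have hrXJ : r ∉ ({s, t, p} : Set S) ∪ C.perp {s, t, p} := by
    rintro (h | h)
    · exact hrmem h
    · rw [h.2 s (by simp)] at hmrs
      norm_num at hmrs
  have hpath := (hrig {s, t, p} hJsph hJirr hJ3.ge l₀ r hl₀X hrXJ).2.2
  -- the rerouting induction along the rigidity path
  have key : ∀ x, Relation.ReflTransGen
      (fun x y => x ∉ ({s, t, p} : Set S) ∪ C.perp {s, t, p} ∧
        y ∉ ({s, t, p} : Set S) ∪ C.perp {s, t, p} ∧ C.Adj x y) x r →
      (x ∉ ({s, t} : Set S) ∪ C.perp {s, t} ∧ x ∉ ({t, p} : Set S) ∪ C.perp {t, p} ∧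
        C.SameComp (({s, t} : Set S) ∪ C.perp {s, t}) x r ∧
        C.SameComp (({t, p} : Set S) ∪ C.perp {t, p}) x r) ∨
      C.SameComp (({s, t} : Set S) ∪ C.perp {s, t}) p r ∨
      C.SameComp (({t, p} : Set S) ∪ C.perp {t, p}) s r := by
    intro x hx
    induction hx using Relation.ReflTransGen.head_induction_on with
    | refl =>
      exact Or.inl ⟨hrA, hrB, ⟨hrA, hrA, .refl⟩, ⟨hrB, hrB, .refl⟩⟩
    | head hac hcb ih =>
      rename_i a c
      obtain ⟨haJ, hcJ, hadj⟩ := hac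
      rcases ih with ⟨hcA, hcB, hcmpA, hcmpB⟩ | hgoal
      · by_cases haA : a ∈ ({s, t} : Set S) ∪ C.perp {s, t}
        · -- a commutes with s and t but not p: reroute to s, conclude for pair {t,p}
          have haperp : a ∈ C.perp {s, t} := by
            rcases haA with h | h
            · exfalso
              apply haJ
              left
              simp only [Set.mem_insert_iff, Set.mem_singleton_iff] at h ⊢
              rcases h with h | h
              · exact Or.inl h
              · exact Or.inr (Or.inl h)
            · exact h
          have hmas : C.m a s = 2 := haperp.2 s (by simp)
          have hmat : C.m a t = 2 := haperp.2 t (by simp)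
          have haJ' : a ∉ ({s, t, p} : Set S) := fun h => haJ (Or.inl h)
          have hmap : C.m a p ≠ 2 := by
            intro h
            exact haJ (Or.inr ⟨haJ', by
              intro j hj
              simp only [Set.mem_insert_iff, Set.mem_singleton_iff] at hj
              rcases hj with rfl | rfl | rfl
              exacts [hmas, hmat, h]⟩)
          have haB : a ∉ ({t, p} : Set S) ∪ C.perp {t, p} := by
            rintro (h | h)
            · apply haJ'
              simp only [Set.mem_insert_iff, Set.mem_singleton_iff] at h ⊢
              rcases h with h | h
              · exact Or.inr (Or.inl h)
              · exact Or.inr (Or.inr h)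
            · exact hmap (h.2 p (by simp))
          have hsa : C.Adj s a := by
            refine ⟨fun h => haJ' (by simp [← h]), ?_⟩
            rw [C.symm, hmas]
            norm_num
          exact Or.inr (Or.inr (C.sameComp_head' hsXB hsa
            (C.sameComp_head' haB hadj hcmpB)))
        · by_cases haB : a ∈ ({t, p} : Set S) ∪ C.perp {t, p}
          · -- a commutes with t and p but not s: reroute to p, conclude for pair {s,t}
            have haperp : a ∈ C.perp {t, p} := by
              rcases haB with h | h
              · exfalso
                apply haJ
                left
                simp only [Set.mem_insert_iff, Set.mem_singleton_iff] at h ⊢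
                rcases h with h | h
                · exact Or.inr (Or.inl h)
                · exact Or.inr (Or.inr h)
              · exact h
            have hmap : C.m a p = 2 := haperp.2 p (by simp)
            have haJ' : a ∉ ({s, t, p} : Set S) := fun h => haJ (Or.inl h)
            have hpa : C.Adj p a := by
              refine ⟨fun h => haJ' (by simp [← h]), ?_⟩
              rw [C.symm, hmap]
              norm_num
            exact Or.inr (Or.inl (C.sameComp_head' hpXA hpa
              (C.sameComp_head' haA hadj hcmpA)))
          · exact Or.inl ⟨haA, haB, C.sameComp_head' haA hadj hcmpA,
              C.sameComp_head' haB hadj hcmpB⟩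
      · exact Or.inr hgoal
  rcases key l₀ hpath with ⟨hl₀A, _, hcmpA, _⟩ | hgoal | hgoal
  · refine finishA (mkNSA (Or.inl hrs)) ?_
    by_cases hpl : p = l₀
    · rw [hpl]; exact hcmpA
    · exact C.sameComp_head' hpXA (hsph hp hl₀L hpl) hcmpA
  · exact finishA (mkNSA (Or.inl hrs)) hgoal
  · exact (finishB (mkNSB (Or.inr hrp)) hgoal).symm
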